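/- Fix α ∈ (0,1) and let I be a sorted scaled Bernoulli instance for which the set {k ∈ [n] : η(I^(k)) ≥ α·v_k} is nonempty, with s_α its maximum and τ*_α = η(I^(s_α)). Then for every 1 ≤ k ≤ n−1 with v_k > τ*_α, it holds that TAL_α(I, v_k) ≥ TAL_α(I, v_{k+1}). -/

import Mathlib

open MeasureTheory ProbabilityTheory

/-- `pick v t` returns `v i` for the least index `i` with `v i ≥ t`, and `0` if no
such index exists. -/
noncomputable def pick {n : ℕ} (v : Fin n → ℝ) (t : ℝ) : ℝ :=
  if h : (Finset.univ.filter (fun i => t ≤ v i)).Nonempty then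
    v ((Finset.univ.filter (fun i => t ≤ v i)).min' h)
  else 0

/-- The realized maximum `M(X)(ω) = max_i X_i(ω)` of an instance. -/
noncomputable def instMax {Ω : Type*} {n : ℕ} (X : Fin n → Ω → ℝ) (ω : Ω) : ℝ :=
  ⨆ i, X i ω

/-- `OPT(X) = E[max_i X_i]`. -/
noncomputable def OPT {Ω : Type*} {m : MeasurableSpace Ω} (μ : Measure Ω) {n : ℕ}
    (X : Fin n → Ω → ℝ) : ℝ :=
  ∫ ω, instMax X ω ∂μ

/-- `TAL(X, τ) = E[pick((X_1,…,X_n), τ)]`: the expected value of the threshold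
algorithm with threshold `τ`. -/
noncomputable def TAL {Ω : Type*} {m : MeasurableSpace Ω} (μ : Measure Ω) {n : ℕ}
    (X : Fin n → Ω → ℝ) (τ : ℝ) : ℝ :=
  ∫ ω, pick (fun i => X i ω) τ ∂μ

/-- `TAL_α(X, τ) = E[pick((X_1,…,X_n), max(τ, α·M))]`: the expected value of the
prediction-augmented threshold algorithm with base threshold `τ` and prediction
quality `α`. -/
noncomputable def TALpred {Ω : Type*} {m : MeasurableSpace Ω} (μ : Measure Ω) (α : ℝ)
    {n : ℕ} (X : Fin n → Ω → ℝ) (τ : ℝ) : ℝ :=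
  ∫ ω, pick (fun i => X i ω) (max τ (α * instMax X ω)) ∂μ

/-- The SC-threshold `η(I) = sup{τ ≥ 0 : TAL(I, τ) ≥ τ}`. -/
noncomputable def SCthreshold {Ω : Type*} {m : MeasurableSpace Ω} (μ : Measure Ω)
    {n : ℕ} (X : Fin n → Ω → ℝ) : ℝ :=
  sSup {τ : ℝ | 0 ≤ τ ∧ τ ≤ TAL μ X τ}

namespace Stmt5

/-- Expectation over independent Bernoulli-type list: entry (v, q) contributes v w.p. q, else 0. -/
noncomputable def Ex : List (ℝ × ℝ) → (List ℝ → ℝ) → ℝ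
  | [], f => f []
  | (e :: l), f => e.2 * Ex l (fun xs => f (e.1 :: xs)) + (1 - e.2) * Ex l (fun xs => f (0 :: xs))

open Classical in
/-- first element ≥ th, else 0 -/
noncomputable def pickL (th : ℝ) (l : List ℝ) : ℝ :=
  l.foldr (fun x acc => if th ≤ x then x else acc) 0

noncomputable def maxL (l : List ℝ) : ℝ := l.foldr max 0

/-- xs is an outcome pattern of l -/
def Pat (l : List (ℝ × ℝ)) (xs : List ℝ) : Prop :=
  List.Forall₂ (fun e x => x = e.1 ∨ x = 0) l xs

@[simp] lemma Ex_nil (f : List ℝ → ℝ) : Ex ([]) f = f ([]) := rfl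

lemma Ex_cons (e : ℝ × ℝ) (l : List (ℝ × ℝ)) (f : List ℝ → ℝ) :
    Ex (e :: l) f = e.2 * Ex l (fun xs => f (e.1 :: xs)) + (1 - e.2) * Ex l (fun xs => f (0 :: xs)) := rfl

lemma Ex_congr {l : List (ℝ × ℝ)} {f g : List ℝ → ℝ}
    (h : ∀ xs, Pat l xs → f xs = g xs) : Ex l f = Ex l g := by
  induction l generalizing f g with
  | nil => exact h ([]) List.Forall₂.nil
  | cons e l ih =>
      simp only [Ex_cons]
      rw [ih (fun xs hxs => h _ (List.Forall₂.cons (Or.inl rfl) hxs)),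
        ih (fun xs hxs => h _ (List.Forall₂.cons (Or.inr rfl) hxs))]

lemma Ex_add (l : List (ℝ × ℝ)) (f g : List ℝ → ℝ) :
    Ex l (fun xs => f xs + g xs) = Ex l f + Ex l g := by
  induction l generalizing f g with
  | nil => rfl
  | cons e l ih => simp only [Ex_cons, ih]; ring

lemma Ex_const (l : List (ℝ × ℝ)) (c : ℝ) : Ex l (fun _ => c) = c := by
  induction l with
  | nil => rfl
  | cons e l ih => simp only [Ex_cons, ih]; ring

lemma Ex_smul (l : List (ℝ × ℝ)) (c : ℝ) (f : List ℝ → ℝ) :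
    Ex l (fun xs => c * f xs) = c * Ex l f := by
  induction l generalizing f with
  | nil => rfl
  | cons e l ih => simp only [Ex_cons, ih]; ring

def QOK (l : List (ℝ × ℝ)) : Prop := ∀ e ∈ l, 0 ≤ e.2 ∧ e.2 ≤ 1

lemma Ex_mono {l : List (ℝ × ℝ)} (hq : QOK l) {f g : List ℝ → ℝ}
    (h : ∀ xs, Pat l xs → f xs ≤ g xs) : Ex l f ≤ Ex l g := by
  induction l generalizing f g with
  | nil => exact h ([]) List.Forall₂.nil
  | cons e l ih =>
      have he := hq e (List.mem_cons_self)
      have hq' : QOK l := fun e' he' => hq e' (List.mem_cons_of_mem _ he')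
      simp only [Ex_cons]
      have h1 := ih hq' (f := fun xs => f (e.1 :: xs)) (g := fun xs => g (e.1 :: xs))
        (fun xs hxs => h _ (List.Forall₂.cons (Or.inl rfl) hxs))
      have h2 := ih hq' (f := fun xs => f (0 :: xs)) (g := fun xs => g (0 :: xs))
        (fun xs hxs => h _ (List.Forall₂.cons (Or.inr rfl) hxs))
      have := he.1; have := he.2
      nlinarith

lemma Ex_append (l l' : List (ℝ × ℝ)) (f : List ℝ → ℝ) :
    Ex (l ++ l') f = Ex l (fun xs => Ex l' (fun ys => f (xs ++ ys))) := by
  induction l generalizing f with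
  | nil => simp
  | cons e l ih => simp only [List.cons_append, Ex_cons, ih]

lemma Ex_concat (l : List (ℝ × ℝ)) (e : ℝ × ℝ) (f : List ℝ → ℝ) :
    Ex (l ++ [e]) f = Ex l (fun xs => e.2 * f (xs ++ [e.1]) + (1 - e.2) * f (xs ++ [0])) := by
  rw [Ex_append]; rfl

@[simp] lemma pickL_nil (th : ℝ) : pickL th ([]) = 0 := rfl

lemma pickL_cons (th x : ℝ) (xs : List ℝ) :
    pickL th (x :: xs) = if th ≤ x then x else pickL th xs := rfl

lemma pickL_ext {th₁ th₂ : ℝ} {xs : List ℝ}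
    (h : ∀ x ∈ xs, (th₁ ≤ x ↔ th₂ ≤ x)) : pickL th₁ xs = pickL th₂ xs := by
  induction xs with
  | nil => rfl
  | cons x xs ih =>
      have hx := h x (List.mem_cons_self)
      simp only [pickL_cons]
      by_cases h1 : th₁ ≤ x
      · rw [if_pos h1, if_pos (hx.1 h1)]
      · rw [if_neg h1, if_neg (fun h2 => h1 (hx.2 h2)),
          ih (fun y hy => h y (List.mem_cons_of_mem _ hy))]

lemma pickL_zero_or_mem (th : ℝ) (xs : List ℝ) : pickL th xs = 0 ∨ pickL th xs ∈ xs := by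
  induction xs with
  | nil => exact Or.inl rfl
  | cons x xs ih =>
      rw [pickL_cons]
      by_cases h : th ≤ x
      · rw [if_pos h]; exact Or.inr (List.mem_cons_self)
      · rw [if_neg h]; exact ih.imp id (List.mem_cons_of_mem x)

lemma pickL_zero_or_ge (th : ℝ) (xs : List ℝ) : pickL th xs = 0 ∨ th ≤ pickL th xs := by
  induction xs with
  | nil => exact Or.inl rfl
  | cons x xs ih =>
      rw [pickL_cons]
      by_cases h : th ≤ x
      · rw [if_pos h]; exact Or.inr h
      · rw [if_neg h]; exact ih

lemma pickL_nonneg {xs : List ℝ} (h : ∀ x ∈ xs, 0 ≤ x) (th : ℝ) : 0 ≤ pickL th xs := by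
  rcases pickL_zero_or_mem th xs with h' | h'
  · rw [h']
  · exact h _ h'

lemma pickL_le {xs : List ℝ} {C : ℝ} (h : ∀ x ∈ xs, x ≤ C) (hC : 0 ≤ C) (th : ℝ) :
    pickL th xs ≤ C := by
  rcases pickL_zero_or_mem th xs with h' | h'
  · rw [h']; exact hC
  · exact h _ h'

lemma pickL_zero_cons {th : ℝ} (hth : 0 < th) (xs : List ℝ) :
    pickL th (0 :: xs) = pickL th xs := by
  rw [pickL_cons, if_neg (by linarith)]

lemma pickL_append {th : ℝ} (hth : 0 < th) (xs ys : List ℝ) :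
    pickL th (xs ++ ys) = if pickL th xs = 0 then pickL th ys else pickL th xs := by
  induction xs with
  | nil => simp
  | cons x xs ih =>
      by_cases h : th ≤ x
      · have hx : pickL th (x :: xs) = x := by rw [pickL_cons, if_pos h]
        have hx0 : ¬ x = 0 := by intro h0; rw [h0] at h; linarith
        rw [List.cons_append, pickL_cons, if_pos h, hx, if_neg hx0]
      · have hx : pickL th (x :: xs) = pickL th xs := by rw [pickL_cons, if_neg h]
        rw [List.cons_append, pickL_cons, if_neg h, hx, ih]

@[simp] lemma maxL_nil : maxL ([]) = 0 := rfl

@[simp] lemma maxL_cons (x : ℝ) (xs : List ℝ) : maxL (x :: xs) = max x (maxL xs) := rfl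

lemma maxL_nonneg (xs : List ℝ) : 0 ≤ maxL xs := by
  induction xs with
  | nil => simp
  | cons x xs ih => simp only [maxL_cons, le_max_iff]; right; exact ih

lemma le_maxL {x : ℝ} {xs : List ℝ} (h : x ∈ xs) : x ≤ maxL xs := by
  induction xs with
  | nil => simp at h
  | cons y ys ih =>
      rcases List.mem_cons.1 h with h' | h'
      · subst h'; simp
      · simp only [maxL_cons, le_max_iff]; right; exact ih h'

lemma maxL_le {xs : List ℝ} {C : ℝ} (h : ∀ x ∈ xs, x ≤ C) (hC : 0 ≤ C) : maxL xs ≤ C := by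
  induction xs with
  | nil => simpa
  | cons x xs ih =>
      simp only [maxL_cons, max_le_iff]
      exact ⟨h x (List.mem_cons_self), ih (fun y hy => h y (List.mem_cons_of_mem _ hy))⟩

lemma maxL_concat (xs : List ℝ) (y : ℝ) : maxL (xs ++ [y]) = max (maxL xs) y := by
  induction xs with
  | nil => simp [maxL, max_comm]
  | cons x xs ih => simp [ih, max_assoc]

noncomputable def TALd (a : ℝ) (l : List (ℝ × ℝ)) : ℝ := Ex l (fun xs => pickL a xs)

noncomputable def P0d (t : ℝ) (l : List (ℝ × ℝ)) : ℝ :=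
  Ex l (fun xs => if pickL t xs = 0 then 1 else 0)

noncomputable def Nd (αp t c : ℝ) (l : List (ℝ × ℝ)) : ℝ :=
  Ex l (fun xs => if αp * maxL xs ≤ c then c - pickL (max t (αp * maxL xs)) xs else 0)

noncomputable def Fd (αp a : ℝ) (l : List (ℝ × ℝ)) : ℝ :=
  Ex l (fun xs => pickL (max a (αp * maxL xs)) xs)

lemma Pat_mem {l : List (ℝ × ℝ)} {xs : List ℝ} (hp : Pat l xs) {x : ℝ} (hx : x ∈ xs) :
    x = 0 ∨ ∃ e ∈ l, x = e.1 := by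
  induction hp with
  | nil => simp at hx
  | @cons e y l' ys' hee htail ih =>
      rcases List.mem_cons.1 hx with h | h
      · subst h
        rcases hee with h | h
        · exact Or.inr ⟨e, List.mem_cons_self, h⟩
        · exact Or.inl h
      · rcases ih h with h' | ⟨e', he', hx'⟩
        · exact Or.inl h'
        · exact Or.inr ⟨e', List.mem_cons_of_mem _ he', hx'⟩

/-- entries of a pattern are 0 or ≥ c when all values are ≥ c ≥ 0 -/
lemma Pat_entry_ge {l : List (ℝ × ℝ)} {xs : List ℝ} (hp : Pat l xs)
    (hv : ∀ e ∈ l, c ≤ e.1) {x : ℝ} (hx : x ∈ xs) : x = 0 ∨ c ≤ x := by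
  rcases Pat_mem hp hx with h | ⟨e, he, hx'⟩
  · exact Or.inl h
  · exact Or.inr (hx' ▸ hv e he)

lemma Pat_entry_nonneg {l : List (ℝ × ℝ)} {xs : List ℝ} (hp : Pat l xs)
    (hv : ∀ e ∈ l, 0 ≤ e.1) {x : ℝ} (hx : x ∈ xs) : 0 ≤ x := by
  rcases Pat_mem hp hx with h | ⟨e, he, hx'⟩
  · rw [h]
  · exact hx' ▸ hv e he

lemma Pat_entry_le {l : List (ℝ × ℝ)} {xs : List ℝ} (hp : Pat l xs) {w : ℝ}
    (hv : ∀ e ∈ l, e.1 ≤ w) (hw : 0 ≤ w) {x : ℝ} (hx : x ∈ xs) : x ≤ w := by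
  rcases Pat_mem hp hx with h | ⟨e, he, hx'⟩
  · rw [h]; exact hw
  · exact hx' ▸ hv e he

/-- head-stripping for the TAL bound -/
lemma TALd_strip {a v₀ q₀ : ℝ} {p : List (ℝ × ℝ)} (ha : 0 < a) (hq0 : 0 ≤ q₀) (hq1 : q₀ ≤ 1)
    (h : TALd a ((v₀, q₀) :: p) < a) : TALd a p < a := by
  have hexp : TALd a ((v₀, q₀) :: p)
      = q₀ * (if a ≤ v₀ then v₀ else TALd a p) + (1 - q₀) * TALd a p := by
    rw [TALd, Ex_cons]
    congr 1
    · congr 1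
      by_cases hv : a ≤ v₀
      · rw [if_pos hv]
        calc Ex p (fun xs => pickL a (v₀ :: xs))
            = Ex p (fun _ => v₀) := Ex_congr (fun xs _ => by rw [pickL_cons, if_pos hv])
          _ = v₀ := Ex_const _ _
      · rw [if_neg hv]
        exact Ex_congr (fun xs _ => by rw [pickL_cons, if_neg hv])
    · congr 1
      exact Ex_congr (fun xs _ => pickL_zero_cons ha xs)
  rw [hexp] at h
  by_cases hv : a ≤ v₀
  · rw [if_pos hv] at h
    rcases eq_or_lt_of_le hq1 with h1 | h1
    · exfalso; rw [h1] at h; simp at h; linarith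
    · by_contra hT
      push_neg at hT
      have k1 : 0 ≤ q₀ * (v₀ - a) := mul_nonneg hq0 (by linarith)
      have k2 : 0 ≤ (1 - q₀) * (TALd a p - a) := mul_nonneg (by linarith) (by linarith)
      nlinarith
  · rw [if_neg hv] at h; nlinarith

/-- the strict Fact-F hypothesis, over all nonempty prefixes (with their last element) -/
def FFlt (αp t : ℝ) (l : List (ℝ × ℝ)) : Prop :=
  ∀ pre e, (pre ++ [e]) <+: l → TALd (max t (αp * e.1)) (pre ++ [e]) < max t (αp * e.1)

lemma FFlt_tail {αp t : ℝ} {x : ℝ × ℝ} {l : List (ℝ × ℝ)} (ht : 0 < t)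
    (hx : 0 ≤ x.2 ∧ x.2 ≤ 1) (h : FFlt αp t (x :: l)) : FFlt αp t l := by
  intro pre e hpre
  have h2 := h (x :: pre) e (by
    rw [List.cons_append]
    exact (List.cons_prefix_cons).2 ⟨rfl, hpre⟩)
  rw [List.cons_append] at h2
  have hx' : x = (x.1, x.2) := rfl
  rw [hx'] at h2
  exact TALd_strip (lt_of_lt_of_le ht (le_max_left _ _)) hx.1 hx.2 h2

lemma FFlt_prefix {αp t : ℝ} {l l' : List (ℝ × ℝ)} (h : FFlt αp t (l ++ l')) : FFlt αp t l :=
  fun pre e hpre => h pre e (hpre.trans (List.prefix_append l l'))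

/-- pickL at any threshold in (0, c] equals pickL at t, on patterns with entries 0-or-≥c -/
lemma pickL_low_eq {a t c : ℝ} (ha : 0 < a) (hac : a ≤ c) (ht : 0 < t) (htc : t ≤ c)
    {xs : List ℝ} (hxs : ∀ x ∈ xs, x = 0 ∨ c ≤ x) : pickL a xs = pickL t xs := by
  apply pickL_ext
  intro x hx
  rcases hxs x hx with h | h
  · subst h; constructor <;> intro h' <;> linarith
  · constructor <;> intro _ <;> linarith

lemma pickL_concat_zero {a : ℝ} (ha : 0 < a) (xs : List ℝ) :
    pickL a (xs ++ [0]) = pickL a xs := by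
  rw [pickL_append ha]
  have : pickL a ([0]) = 0 := by rw [pickL_cons, if_neg (by linarith), pickL_nil]
  rw [this]
  by_cases h : pickL a xs = 0
  · rw [if_pos h, h]
  · rw [if_neg h]

lemma pickL_concat_big {a w : ℝ} (ha : 0 < a) (haw : a ≤ w) (xs : List ℝ) :
    pickL a (xs ++ [w]) = if pickL a xs = 0 then w else pickL a xs := by
  rw [pickL_append ha]
  have : pickL a ([w]) = w := by rw [pickL_cons, if_pos haw]
  rw [this]

/-- TALd of l ++ [(w,r)] at a low threshold a ∈ (0,c], with all values of l ≥ c and w ≥ c -/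
lemma TALd_concat_low {a t c w r : ℝ} {l : List (ℝ × ℝ)} (ha : 0 < a) (hac : a ≤ c)
    (ht : 0 < t) (htc : t ≤ c) (hcw : c ≤ w) (hv : ∀ e ∈ l, c ≤ e.1) :
    TALd a (l ++ [(w, r)]) = TALd t l + r * (w * P0d t l) := by
  rw [TALd, Ex_concat]
  have key : ∀ xs, Pat l xs →
      r * pickL a (xs ++ [w]) + (1 - r) * pickL a (xs ++ [0])
      = pickL t xs + r * (w * (if pickL t xs = 0 then 1 else 0)) := by
    intro xs hxs
    have hent : ∀ x ∈ xs, x = 0 ∨ c ≤ x := fun x hx => Pat_entry_ge hxs hv hx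
    have h1 : pickL a xs = pickL t xs := pickL_low_eq ha hac ht htc hent
    rw [pickL_concat_zero ha, pickL_concat_big ha (le_trans hac hcw), h1]
    by_cases h0 : pickL t xs = 0
    · rw [if_pos h0, if_pos h0, h0]; ring
    · rw [if_neg h0, if_neg h0]; ring
  rw [Ex_congr key, Ex_add]
  congr 1
  rw [Ex_smul]
  congr 1
  rw [Ex_smul]
  rfl

lemma Nd_concat {αp t c w r : ℝ} {l : List (ℝ × ℝ)} (hα0 : 0 < αp) (ht : 0 < t) (htc : t ≤ c)
    (hcw : c ≤ w) (hv : ∀ e ∈ l, c ≤ e.1) (hvw : ∀ e ∈ l, e.1 ≤ w) :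
    Nd αp t c (l ++ [(w, r)])
      = r * (if αp * w ≤ c then c - TALd t l - w * P0d t l else 0) + (1 - r) * Nd αp t c l := by
  have hw0 : 0 ≤ w := le_trans (by linarith) hcw
  rw [Nd, Ex_concat]
  have key : ∀ xs, Pat l xs →
      r * (if αp * maxL (xs ++ [w]) ≤ c then c - pickL (max t (αp * maxL (xs ++ [w]))) (xs ++ [w]) else 0)
      + (1 - r) * (if αp * maxL (xs ++ [0]) ≤ c then c - pickL (max t (αp * maxL (xs ++ [0]))) (xs ++ [0]) else 0)
      = r * (if αp * w ≤ c then c - (pickL t xs + w * (if pickL t xs = 0 then 1 else 0)) else 0)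
        + (1 - r) * (if αp * maxL xs ≤ c then c - pickL (max t (αp * maxL xs)) xs else 0) := by
    intro xs hxs
    have hent : ∀ x ∈ xs, x = 0 ∨ c ≤ x := fun x hx => Pat_entry_ge hxs hv hx
    have hentw : ∀ x ∈ xs, x ≤ w := fun x hx => Pat_entry_le hxs hvw hw0 hx
    have hmw : maxL (xs ++ [w]) = w := by
      rw [maxL_concat]; exact max_eq_right (maxL_le hentw hw0)
    have hm0 : maxL (xs ++ [0]) = maxL xs := by
      rw [maxL_concat]; exact max_eq_left (maxL_nonneg xs)
    rw [hmw, hm0]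
    congr 1
    · congr 1
      by_cases hc : αp * w ≤ c
      · rw [if_pos hc, if_pos hc]
        have ha : 0 < max t (αp * w) := lt_of_lt_of_le ht (le_max_left _ _)
        have hac : max t (αp * w) ≤ c := max_le htc hc
        rw [pickL_concat_big ha (le_trans hac hcw),
          pickL_low_eq ha hac ht htc hent]
        by_cases h0 : pickL t xs = 0
        · rw [if_pos h0, if_pos h0, h0]; ring
        · rw [if_neg h0, if_neg h0]; ring
      · rw [if_neg hc, if_neg hc]
    · congr 1
      by_cases hc : αp * maxL xs ≤ c
      · rw [if_pos hc, if_pos hc,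
          pickL_concat_zero (lt_of_lt_of_le ht (le_max_left _ _))]
      · rw [if_neg hc, if_neg hc]
  rw [Ex_congr key, Ex_add, Ex_smul, Ex_smul]
  congr 2
  by_cases hc : αp * w ≤ c
  · rw [if_pos hc]
    have : (fun xs => if αp * w ≤ c then c - (pickL t xs + w * (if pickL t xs = 0 then 1 else 0)) else 0)
        = fun xs => c - (pickL t xs + w * (if pickL t xs = 0 then 1 else 0)) := by
      funext xs; rw [if_pos hc]
    rw [this]
    have e1 : Ex l (fun xs => c - (pickL t xs + w * (if pickL t xs = 0 then 1 else 0)))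
        = Ex l (fun xs => c + (-1) * (pickL t xs + w * (if pickL t xs = 0 then 1 else 0))) := by
      apply Ex_congr; intro xs _; ring
    rw [e1, Ex_add, Ex_const, Ex_smul, Ex_add]
    have e2 : Ex l (fun xs => w * (if pickL t xs = 0 then 1 else 0)) = w * P0d t l := Ex_smul l w _
    rw [e2]
    show c + -1 * (TALd t l + w * P0d t l) = c - TALd t l - w * P0d t l
    ring
  · rw [if_neg hc]
    have : (fun xs => if αp * w ≤ c then c - (pickL t xs + w * (if pickL t xs = 0 then 1 else 0)) else 0)
        = fun _ : List ℝ => (0:ℝ) := by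
      funext xs; rw [if_neg hc]
    rw [this, Ex_const]

lemma P0d_nonneg {t : ℝ} {l : List (ℝ × ℝ)} (hq : QOK l) : 0 ≤ P0d t l := by
  have := Ex_mono hq (f := fun _ => (0:ℝ))
    (g := fun xs => if pickL t xs = 0 then 1 else 0)
    (fun xs _ => by split <;> norm_num)
  simpa [Ex_const, P0d] using this

lemma P0d_le_one {t : ℝ} {l : List (ℝ × ℝ)} (hq : QOK l) : P0d t l ≤ 1 := by
  have := Ex_mono hq (g := fun _ => (1:ℝ))
    (f := fun xs => if pickL t xs = 0 then 1 else 0)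
    (fun xs _ => by split <;> norm_num)
  simpa [Ex_const, P0d] using this

lemma TALd_nonneg {l : List (ℝ × ℝ)} (hq : QOK l) (hv : ∀ e ∈ l, 0 ≤ e.1) (t : ℝ) :
    0 ≤ TALd t l := by
  have := Ex_mono hq (f := fun _ => (0:ℝ)) (g := fun xs => pickL t xs)
    (fun xs hxs => pickL_nonneg (fun x hx => Pat_entry_nonneg hxs hv hx) t)
  simpa [Ex_const, TALd] using this

lemma TALd_ge {t c : ℝ} {l : List (ℝ × ℝ)} (hc : 0 ≤ c) (ht : 0 < t)
    (hv : ∀ e ∈ l, c ≤ e.1) (hq : QOK l) : c * (1 - P0d t l) ≤ TALd t l := by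
  have pw : ∀ xs, Pat l xs →
      c + (-c) * (if pickL t xs = 0 then 1 else 0) ≤ pickL t xs := by
    intro xs hxs
    by_cases h0 : pickL t xs = 0
    · rw [if_pos h0, h0]; ring_nf; rfl
    · rw [if_neg h0]
      rcases pickL_zero_or_mem t xs with h | h
      · exact absurd h h0
      · rcases Pat_entry_ge hxs hv h with h' | h'
        · exact absurd h' h0
        · linarith
  have := Ex_mono hq pw
  rw [Ex_add, Ex_const, Ex_smul] at this
  have hP : Ex l (fun xs => if pickL t xs = 0 then 1 else 0) = P0d t l := rfl
  rw [hP] at this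
  have h2 : Ex l (pickL t) = TALd t l := rfl
  rw [h2] at this
  nlinarith [this]

lemma L2 {αp t c : ℝ} (hα0 : 0 < αp) (ht : 0 < t) (htc : t ≤ c) :
    ∀ l : List (ℝ × ℝ), QOK l → (∀ e ∈ l, c ≤ e.1) →
    List.Pairwise (fun e f : ℝ × ℝ => e.1 ≤ f.1) l →
    (∀ pre e, (pre ++ [e]) <+: l →
      TALd (max t (αp * e.1)) (pre ++ [e]) ≤ max t (αp * e.1)) →
    max 0 (c - TALd t l) ≤ Nd αp t c l := by
  intro l
  induction l using List.reverseRecOn with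
  | nil =>
      intro _ _ _ _
      have h1 : TALd t ([] : List (ℝ × ℝ)) = 0 := rfl
      have h2 : Nd αp t c ([]) = c := by
        show (if αp * maxL ([]) ≤ c then c - pickL (max t (αp * maxL ([]))) ([]) else 0) = c
        rw [maxL_nil, mul_zero, if_pos (by linarith), pickL_nil, sub_zero]
      rw [h1, h2, sub_zero]
      exact max_le (by linarith) le_rfl
  | append_singleton ys e ih =>
      intro hq hv hs hff
      obtain ⟨w, r⟩ := e
      have hq_ys : QOK ys := fun e he => hq e (List.mem_append_left _ he)
      have hr : 0 ≤ r ∧ r ≤ 1 := hq (w, r) (List.mem_append_right _ (List.mem_cons_self))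
      have hv_ys : ∀ e ∈ ys, c ≤ e.1 := fun e he => hv e (List.mem_append_left _ he)
      have hcw : c ≤ w := hv (w, r) (List.mem_append_right _ (List.mem_cons_self))
      have hs_split := List.pairwise_append.1 hs
      have hvw : ∀ e ∈ ys, e.1 ≤ w :=
        fun e he => hs_split.2.2 e he (w, r) (List.mem_cons_self)
      have hff_ys : ∀ pre e, (pre ++ [e]) <+: ys →
          TALd (max t (αp * e.1)) (pre ++ [e]) ≤ max t (αp * e.1) :=
        fun pre e hpre => hff pre e (hpre.trans (List.prefix_append ys ([(w, r)])))
      have IH := ih hq_ys hv_ys hs_split.1 hff_ys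
      have hπ0 : 0 ≤ P0d t ys := P0d_nonneg hq_ys
      have hπ1 : P0d t ys ≤ 1 := P0d_le_one hq_ys
      have hE0 : 0 ≤ TALd t ys :=
        TALd_nonneg hq_ys (fun e he => le_trans (by linarith) (hv_ys e he)) t
      have hEc : c * (1 - P0d t ys) ≤ TALd t ys := TALd_ge (by linarith) ht hv_ys hq_ys
      have hNd := Nd_concat (αp := αp) (r := r) hα0 ht htc hcw hv_ys hvw
      have hT := TALd_concat_low (a := t) (r := r) ht htc ht htc hcw hv_ys
      rw [hNd, hT]
      set E := TALd t ys with hE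
      set π := P0d t ys with hπ
      set N := Nd αp t c ys with hN
      by_cases hcww : αp * w ≤ c
      · have htop0 := hff ys (w, r) (List.prefix_refl _)
        have htop : TALd (max t (αp * w)) (ys ++ [(w, r)]) ≤ max t (αp * w) := htop0
        have haw0 : 0 < max t (αp * w) := lt_of_lt_of_le ht (le_max_left _ _)
        have haw : max t (αp * w) ≤ c := max_le htc hcww
        rw [TALd_concat_low haw0 haw ht htc hcw hv_ys] at htop
        have hc1 : E + r * (w * π) ≤ c := le_trans htop haw
        rw [if_pos hcww]
        have hrwπ : 0 ≤ r * (w * π) := mul_nonneg hr.1 (mul_nonneg (by linarith) hπ0)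
        have hIH' : c - E ≤ N := le_trans (le_max_right _ _) IH
        have hmax : max 0 (c - (E + r * (w * π))) = c - (E + r * (w * π)) :=
          max_eq_right (by linarith)
        rw [hmax]
        nlinarith [mul_le_mul_of_nonneg_left hIH' (by linarith : (0:ℝ) ≤ 1 - r)]
      · rw [if_neg hcww]
        have hN0 : 0 ≤ N := le_trans (le_max_left _ _) IH
        apply max_le
        · nlinarith
        · have hkey : c ≤ E + w * π := by nlinarith [mul_le_mul_of_nonneg_right hcw hπ0]
          have hIH' : c - E ≤ N := le_trans (le_max_right _ _) IH
          nlinarith [mul_le_mul_of_nonneg_left hIH' (by linarith : (0:ℝ) ≤ 1 - r),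
            mul_nonneg hr.1 (sub_nonneg.2 hkey)]

lemma Ex_sub (l : List (ℝ × ℝ)) (f g : List ℝ → ℝ) :
    Ex l (fun xs => f xs - g xs) = Ex l f - Ex l g := by
  induction l generalizing f g with
  | nil => rfl
  | cons e l ih => simp only [Ex_cons, ih]; ring

lemma Fd_int_zero_cons {αp a : ℝ} (ha : 0 < a) (hα0 : 0 ≤ αp) (xs : List ℝ) :
    pickL (max a (αp * maxL (0 :: xs))) (0 :: xs) = pickL (max a (αp * maxL xs)) xs := by
  have hm : maxL (0 :: xs) = maxL xs := by
    rw [maxL_cons]; exact max_eq_right (maxL_nonneg xs)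
  rw [hm, pickL_zero_cons (lt_of_lt_of_le ha (le_max_left _ _))]

lemma keyA {αp t b v₀ : ℝ} (hα0 : 0 ≤ αp) (hα1 : αp ≤ 1) (ht : 0 < t)
    (h1 : t ≤ v₀) (h2 : v₀ < b) (xs : List ℝ) :
    pickL (max t (αp * maxL (v₀ :: xs))) (v₀ :: xs)
      - pickL (max b (αp * maxL (v₀ :: xs))) (v₀ :: xs)
    = (pickL (max t (αp * maxL xs)) xs - pickL (max b (αp * maxL xs)) xs)
      + (if αp * maxL xs ≤ v₀ then v₀ - pickL (max t (αp * maxL xs)) xs else 0) := by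
  have hm0 : 0 ≤ maxL xs := maxL_nonneg xs
  have hv0 : 0 ≤ v₀ := by linarith
  rw [maxL_cons]
  by_cases hc : αp * maxL xs ≤ v₀
  · have hM : αp * max v₀ (maxL xs) ≤ v₀ := by
      rcases max_cases v₀ (maxL xs) with ⟨h, _⟩ | ⟨h, _⟩ <;> rw [h] <;> nlinarith
    have e1 : pickL (max t (αp * max v₀ (maxL xs))) (v₀ :: xs) = v₀ := by
      rw [pickL_cons, if_pos (max_le h1 hM)]
    have hthb : max b (αp * max v₀ (maxL xs)) = b := max_eq_left (by linarith)
    have e2 : pickL (max b (αp * max v₀ (maxL xs))) (v₀ :: xs) = pickL b xs := by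
      rw [pickL_cons, hthb, if_neg (by linarith)]
    have e3 : max b (αp * maxL xs) = b := max_eq_left (by linarith)
    rw [e1, e2, if_pos hc, e3]
    ring
  · push_neg at hc
    have hmv : v₀ ≤ maxL xs := by nlinarith
    have hM : max v₀ (maxL xs) = maxL xs := max_eq_right hmv
    rw [hM, if_neg (not_le.2 hc)]
    have e1 : pickL (max t (αp * maxL xs)) (v₀ :: xs) = pickL (max t (αp * maxL xs)) xs := by
      rw [pickL_cons, if_neg]
      intro hh; have := le_trans (le_max_right t _) hh; linarith
    have e2 : pickL (max b (αp * maxL xs)) (v₀ :: xs) = pickL (max b (αp * maxL xs)) xs := by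
      rw [pickL_cons, if_neg]
      intro hh; have := le_trans (le_max_right b _) hh; linarith
    rw [e1, e2]; ring

theorem mainD {αp t b : ℝ} (hα0 : 0 < αp) (hα1 : αp ≤ 1) (ht : 0 < t) (htb : t ≤ b) :
    ∀ l : List (ℝ × ℝ), QOK l → (∀ e ∈ l, 0 ≤ e.1) →
    List.Pairwise (fun e f : ℝ × ℝ => e.1 ≤ f.1) l → FFlt αp t l →
    Fd αp b l ≤ Fd αp t l := by
  intro l
  induction l with
  | nil => intro _ _ _ _; exact le_refl _
  | cons x l' ih =>
      intro hq hv hs hff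
      obtain ⟨v₀, q₀⟩ := x
      have hq0 : 0 ≤ q₀ ∧ q₀ ≤ 1 := hq _ (List.mem_cons_self)
      have hv₀ : (0:ℝ) ≤ v₀ := hv _ (List.mem_cons_self)
      have hq' : QOK l' := fun e he => hq e (List.mem_cons_of_mem _ he)
      have hv' : ∀ e ∈ l', 0 ≤ e.1 := fun e he => hv e (List.mem_cons_of_mem _ he)
      have hpc := List.pairwise_cons.1 hs
      have hvtail : ∀ e ∈ l', v₀ ≤ e.1 := fun e he => hpc.1 e he
      have hs' := hpc.2
      have hff' : FFlt αp t l' := FFlt_tail ht hq0 hff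
      have IH := ih hq' hv' hs' hff'
      have hFd : ∀ a : ℝ, 0 < a → Fd αp a ((v₀, q₀) :: l')
          = q₀ * Ex l' (fun xs => pickL (max a (αp * maxL (v₀ :: xs))) (v₀ :: xs))
            + (1 - q₀) * Fd αp a l' := by
        intro a ha
        rw [Fd, Ex_cons]
        congr 2
        exact Ex_congr (fun xs _ => Fd_int_zero_cons ha (le_of_lt hα0) xs)
      by_cases hb : b ≤ v₀
      · have heq : Fd αp b ((v₀, q₀) :: l') = Fd αp t ((v₀, q₀) :: l') := by
          apply Ex_congr; intro xs hxs
          apply pickL_ext; intro x hx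
          have hvall : ∀ e ∈ (v₀, q₀) :: l', b ≤ e.1 := by
            intro e he
            rcases List.mem_cons.1 he with h | h
            · rw [h]; exact hb
            · exact le_trans hb (hvtail e h)
          rcases Pat_entry_ge hxs hvall hx with h | h
          · subst h
            have p1 : 0 < max b (αp * maxL xs) := lt_of_lt_of_le (by linarith) (le_max_left _ _)
            have p2 : 0 < max t (αp * maxL xs) := lt_of_lt_of_le ht (le_max_left _ _)
            constructor <;> intro hh <;> linarith
          · constructor <;> intro hh
            · exact max_le (by linarith) (le_trans (le_max_right _ _) hh)
            · exact max_le h (le_trans (le_max_right _ _) hh)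
        rw [heq]
      · push_neg at hb
        by_cases hvt : v₀ < t
        · have heq : ∀ a : ℝ, t ≤ a → Fd αp a ((v₀, q₀) :: l') = Fd αp a l' := by
            intro a hta
            rw [hFd a (by linarith)]
            have hmid : Ex l' (fun xs => pickL (max a (αp * maxL (v₀ :: xs))) (v₀ :: xs))
                = Fd αp a l' := by
              apply Ex_congr; intro xs hxs
              have hd : pickL (max a (αp * maxL (v₀ :: xs))) (v₀ :: xs)
                  = pickL (max a (αp * maxL (v₀ :: xs))) xs := by
                rw [pickL_cons, if_neg]
                intro hh; have := le_trans (le_max_left a _) hh; linarith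
              rw [hd, maxL_cons]
              by_cases hmm : v₀ ≤ maxL xs
              · rw [max_eq_right hmm]
              · push_neg at hmm
                have hall : ∀ x ∈ xs, x = 0 := by
                  intro x hx
                  rcases Pat_entry_ge hxs hvtail hx with h | h
                  · exact h
                  · exfalso; have := le_maxL hx; linarith
                have z1 : pickL (max a (αp * max v₀ (maxL xs))) xs = 0 := by
                  rcases pickL_zero_or_mem (max a (αp * max v₀ (maxL xs))) xs with h | h
                  · exact h
                  · exact hall _ h
                have z2 : pickL (max a (αp * maxL xs)) xs = 0 := by
                  rcases pickL_zero_or_mem (max a (αp * maxL xs)) xs with h | h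
                  · exact h
                  · exact hall _ h
                rw [z1, z2]
            rw [hmid]; ring
          rw [heq b (by linarith), heq t le_rfl]
          exact IH
        · push_neg at hvt
          rw [hFd b (by linarith), hFd t ht]
          have hkey : Ex l' (fun xs => pickL (max t (αp * maxL (v₀ :: xs))) (v₀ :: xs))
              - Ex l' (fun xs => pickL (max b (αp * maxL (v₀ :: xs))) (v₀ :: xs))
              = (Fd αp t l' - Fd αp b l') + Nd αp t v₀ l' := by
            rw [← Ex_sub]
            have hpt : ∀ xs, Pat l' xs →
                pickL (max t (αp * maxL (v₀ :: xs))) (v₀ :: xs)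
                  - pickL (max b (αp * maxL (v₀ :: xs))) (v₀ :: xs)
                = (pickL (max t (αp * maxL xs)) xs - pickL (max b (αp * maxL xs)) xs)
                  + (if αp * maxL xs ≤ v₀ then v₀ - pickL (max t (αp * maxL xs)) xs else 0) :=
              fun xs _ => keyA (le_of_lt hα0) hα1 ht hvt hb xs
            rw [Ex_congr hpt, Ex_add, Ex_sub]
            rfl
          have hNd : 0 ≤ Nd αp t v₀ l' := by
            refine le_trans (le_max_left _ _)
              (L2 hα0 ht hvt l' hq' hvtail hs' ?_)
            exact fun pre e hpre => le_of_lt (hff' pre e hpre)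
          have hE : 0 ≤ Ex l' (fun xs => pickL (max t (αp * maxL (v₀ :: xs))) (v₀ :: xs))
              - Ex l' (fun xs => pickL (max b (αp * maxL (v₀ :: xs))) (v₀ :: xs)) := by
            rw [hkey]
            have := sub_nonneg.2 IH
            linarith
          nlinarith [mul_le_mul_of_nonneg_left (sub_nonneg.2 IH) (by linarith : (0:ℝ) ≤ 1 - q₀),
            mul_nonneg hq0.1 hE]

lemma pick_zero (w : Fin 0 → ℝ) (τ : ℝ) : pick w τ = 0 := by
  rw [pick, dif_neg]
  simp [Finset.filter_eq_empty_iff]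

lemma pick_cons {m : ℕ} (w : Fin (m + 1) → ℝ) (τ : ℝ) :
    pick w τ = if τ ≤ w 0 then w 0 else pick (w ∘ Fin.succ) τ := by
  classical
  by_cases h0 : τ ≤ w 0
  · rw [if_pos h0]
    have hmem : (0 : Fin (m+1)) ∈ Finset.univ.filter (fun i => τ ≤ w i) :=
      Finset.mem_filter.2 ⟨Finset.mem_univ _, h0⟩
    have hne : (Finset.univ.filter (fun i => τ ≤ w i)).Nonempty := ⟨0, hmem⟩
    rw [pick, dif_pos hne]
    congr 1
    exact le_antisymm (Finset.min'_le _ _ hmem) (Fin.zero_le _)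
  · rw [if_neg h0]
    by_cases hne : (Finset.univ.filter (fun i : Fin (m+1) => τ ≤ w i)).Nonempty
    · obtain ⟨i, hi⟩ := hne
      have hi' := (Finset.mem_filter.1 hi).2
      have hine : i ≠ 0 := by rintro rfl; exact h0 hi'
      obtain ⟨j, rfl⟩ := Fin.eq_succ_of_ne_zero hine
      have hne2 : (Finset.univ.filter (fun i : Fin m => τ ≤ (w ∘ Fin.succ) i)).Nonempty :=
        ⟨j, Finset.mem_filter.2 ⟨Finset.mem_univ _, hi'⟩⟩
      have hne1 : (Finset.univ.filter (fun i : Fin (m+1) => τ ≤ w i)).Nonempty := ⟨j.succ, hi⟩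
      rw [pick, dif_pos hne1, pick, dif_pos hne2]
      -- show w (min' F) = w (succ (min' F'))
      have hmF : (Finset.univ.filter (fun i : Fin (m+1) => τ ≤ w i)).min' hne1
          = Fin.succ ((Finset.univ.filter (fun i : Fin m => τ ≤ (w ∘ Fin.succ) i)).min' hne2) := by
        apply le_antisymm
        · apply Finset.min'_le
          apply Finset.mem_filter.2
          refine ⟨Finset.mem_univ _, ?_⟩
          have := (Finset.mem_filter.1 (Finset.min'_mem _ hne2)).2
          exact this
        · have hmem' := Finset.min'_mem _ hne1
          have hτ := (Finset.mem_filter.1 hmem').2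
          have hne0 : (Finset.univ.filter (fun i : Fin (m+1) => τ ≤ w i)).min' hne1 ≠ 0 := by
            intro hh
            rw [hh] at hτ
            exact h0 hτ
          obtain ⟨j', hj'⟩ := Fin.eq_succ_of_ne_zero hne0
          rw [hj']
          apply Fin.succ_le_succ_iff.2
          apply Finset.min'_le
          apply Finset.mem_filter.2
          refine ⟨Finset.mem_univ _, ?_⟩
          show τ ≤ w j'.succ
          rw [← hj']
          exact hτ
      rw [hmF]
      rfl
    · rw [pick, dif_neg hne, pick, dif_neg]
      rintro ⟨j, hj⟩
      exact hne ⟨j.succ, Finset.mem_filter.2 ⟨Finset.mem_univ _, (Finset.mem_filter.1 hj).2⟩⟩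

lemma pick_eq_pickL {m : ℕ} (w : Fin m → ℝ) (τ : ℝ) :
    pick w τ = pickL τ (List.ofFn w) := by
  induction m with
  | zero => rw [pick_zero, List.ofFn_zero, pickL_nil]
  | succ m ih =>
      rw [pick_cons, List.ofFn_succ, pickL_cons, ih]
      rfl

lemma iSup_eq_maxL {m : ℕ} (hm : 0 < m) (y : Fin m → ℝ) (hy : ∀ i, 0 ≤ y i) :
    (⨆ i, y i) = maxL (List.ofFn y) := by
  have hbdd : BddAbove (Set.range y) := Set.Finite.bddAbove (Set.finite_range y)
  have hne : Nonempty (Fin m) := ⟨⟨0, hm⟩⟩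
  apply le_antisymm
  · apply ciSup_le
    intro i
    apply le_maxL
    rw [List.mem_ofFn]
    exact ⟨i, rfl⟩
  · refine maxL_le ?_ ?_
    · intro x hx
      rw [List.mem_ofFn] at hx
      obtain ⟨i, rfl⟩ := hx
      exact le_ciSup hbdd i
    · exact le_trans (hy ⟨0, hm⟩) (le_ciSup hbdd ⟨0, hm⟩)

lemma ofFn_castLE {n m : ℕ} (h : m ≤ n) (f : Fin n → ℝ) :
    List.ofFn (fun i : Fin m => f (Fin.castLE h i)) = (List.ofFn f).take m := by
  apply List.ext_getElem
  · simp [min_eq_left h]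
  · intro i h1 h2
    simp [List.getElem_take, List.getElem_ofFn]

lemma cube_to_Ex : ∀ (n : ℕ) (v q : Fin n → ℝ) (f : List ℝ → ℝ),
    ∑ σ : Fin n → Bool, (∏ i, if σ i then q i else 1 - q i)
        * f (List.ofFn (fun i => if σ i then v i else 0))
      = Ex (List.ofFn (fun i => (v i, q i))) f := by
  intro n
  induction n with
  | zero =>
      intro v q f
      rw [List.ofFn_zero]
      have huniq : ∀ σ : Fin 0 → Bool, σ = (fun _ => true) := fun σ => funext (fun i => i.elim0)
      rw [Fintype.sum_eq_single (fun _ : Fin 0 => true) (fun σ hσ => absurd (huniq σ) hσ)]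
      rw [List.ofFn_zero]
      show (∏ i : Fin 0, if true then q i else 1 - q i) * f ([]) = f ([])
      rw [Finset.univ_eq_empty, Finset.prod_empty, one_mul]
  | succ m ih =>
      intro v q f
      rw [← (Fin.consEquiv (fun _ => Bool)).sum_comp]
      rw [Fintype.sum_prod_type]
      rw [Fintype.sum_bool]
      have hexp : ∀ (b : Bool) (σ' : Fin m → Bool),
          ((Fin.consEquiv (fun _ => Bool)) (b, σ')) 0 = b ∧
          ∀ i : Fin m, ((Fin.consEquiv (fun _ => Bool)) (b, σ')) i.succ = σ' i := by
        intro b σ'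
        constructor
        · rfl
        · intro i; rfl
      have hterm : ∀ (b : Bool) (σ' : Fin m → Bool),
          (∏ i, if ((Fin.consEquiv (fun _ => Bool)) (b, σ')) i then q i else 1 - q i)
            * f (List.ofFn (fun i => if ((Fin.consEquiv (fun _ => Bool)) (b, σ')) i then v i else 0))
          = ((if b then q 0 else 1 - q 0) * ∏ i : Fin m, if σ' i then q i.succ else 1 - q i.succ)
            * f ((if b then v 0 else 0) :: List.ofFn (fun i : Fin m => if σ' i then v i.succ else 0)) := by
        intro b σ'
        rw [Fin.prod_univ_succ, List.ofFn_succ]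
        rfl
      rw [List.ofFn_succ, Ex_cons,
        ← ih (fun i => v i.succ) (fun i => q i.succ) (fun xs => f ((v 0) :: xs)),
        ← ih (fun i => v i.succ) (fun i => q i.succ) (fun xs => f ((0:ℝ) :: xs)),
        Finset.mul_sum, Finset.mul_sum]
      congr 1
      · apply Finset.sum_congr rfl
        intro σ' _
        rw [hterm true σ', if_pos rfl, if_pos rfl]
        ring
      · apply Finset.sum_congr rfl
        intro σ' _
        rw [hterm false σ', if_neg (by simp), if_neg (by simp)]
        ring

lemma Ex_take : ∀ (l : List (ℝ × ℝ)) (m : ℕ) (g : List ℝ → ℝ),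
    Ex l (fun xs => g (xs.take m)) = Ex (l.take m) g := by
  intro l
  induction l with
  | nil => intro m g; simp [List.take_nil]
  | cons e l ih =>
      intro m g
      cases m with
      | zero =>
          simp only [List.take_zero]
          exact Ex_const _ _
      | succ m' =>
          rw [List.take_succ_cons, Ex_cons, Ex_cons]
          simp only [List.take_succ_cons]
          rw [ih m' (fun ys => g (e.1 :: ys)), ih m' (fun ys => g ((0:ℝ) :: ys))]

section Bridge

variable {Ω : Type*} [MeasurableSpace Ω] (μ : Measure Ω) [IsProbabilityMeasure μ]

lemma bridge {n : ℕ} (X : Fin n → Ω → ℝ) (v : Fin n → ℝ)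
    (hmeas : ∀ i, Measurable (X i))
    (hindep : iIndepFun X μ)
    (hBer : ∀ i ω, X i ω = v i ∨ X i ω = 0)
    (h : (Fin n → ℝ) → ℝ) :
    ∫ ω, h (fun i => X i ω) ∂μ
      = ∑ σ : Fin n → Bool,
          (∏ i, if σ i then (μ {ω | X i ω = v i}).toReal
            else 1 - (μ {ω | X i ω = v i}).toReal)
            * h (fun i => if σ i then v i else 0) := by
  classical
  set A : Fin n → Set Ω := fun i => {ω | X i ω = v i} with hA
  have hAmeas : ∀ i, MeasurableSet (A i) := fun i => (hmeas i) (measurableSet_singleton (v i))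
  set C : (Fin n → Bool) → Set Ω := fun σ => ⋂ i, (if σ i then A i else (A i)ᶜ) with hC
  have hCmeas : ∀ σ, MeasurableSet (C σ) := by
    intro σ
    apply MeasurableSet.iInter
    intro i
    by_cases hσ : σ i = true
    · rw [if_pos hσ]; exact hAmeas i
    · rw [if_neg hσ]; exact (hAmeas i).compl
  have hpt : ∀ ω, h (fun i => X i ω)
      = ∑ σ : Fin n → Bool,
          Set.indicator (C σ) (fun _ => h (fun i => if σ i then v i else 0)) ω := by
    intro ω
    set σω : Fin n → Bool := fun i => decide (X i ω = v i) with hσω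
    have hmem : ω ∈ C σω := by
      apply Set.mem_iInter.2
      intro i
      by_cases hxi : X i ω = v i
      · have hb : σω i = true := by simp [hσω, hxi]
        rw [if_pos hb]
        exact hxi
      · have hb : ¬ σω i = true := by simp [hσω, hxi]
        rw [if_neg hb]
        exact hxi
    rw [Finset.sum_eq_single_of_mem σω (Finset.mem_univ _)]
    · rw [Set.indicator_of_mem hmem]
      congr 1
      funext i
      by_cases hxi : X i ω = v i
      · have hb : σω i = true := by simp [hσω, hxi]
        rw [if_pos hb, hxi]
      · have hb : ¬ σω i = true := by simp [hσω, hxi]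
        rw [if_neg hb]
        rcases hBer i ω with h' | h'
        · exact absurd h' hxi
        · exact h'
    · intro σ _ hne
      apply Set.indicator_of_notMem
      intro hmemσ
      apply hne
      funext i
      have hiω := Set.mem_iInter.1 hmemσ i
      by_cases hσ : σ i = true
      · rw [if_pos hσ] at hiω
        have hx : X i ω = v i := hiω
        rw [hσ]
        simp [hσω, hx]
      · rw [if_neg hσ] at hiω
        have hx : ¬ (X i ω = v i) := hiω
        rw [Bool.not_eq_true] at hσ
        rw [hσ]
        simp [hσω, hx]
  have hint : ∀ σ : Fin n → Bool,
      Integrable (Set.indicator (C σ) (fun _ => h (fun i => if σ i then v i else 0))) μ :=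
    fun σ => (integrable_const _).indicator (hCmeas σ)
  calc ∫ ω, h (fun i => X i ω) ∂μ
      = ∫ ω, ∑ σ : Fin n → Bool,
          Set.indicator (C σ) (fun _ => h (fun i => if σ i then v i else 0)) ω ∂μ := by
        apply integral_congr_ae
        filter_upwards with ω
        exact hpt ω
    _ = ∑ σ : Fin n → Bool, ∫ ω,
          Set.indicator (C σ) (fun _ => h (fun i => if σ i then v i else 0)) ω ∂μ := by
        exact integral_finset_sum _ (fun σ _ => hint σ)
    _ = ∑ σ : Fin n → Bool,
          (∏ i, if σ i then (μ (A i)).toReal else 1 - (μ (A i)).toReal)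
            * h (fun i => if σ i then v i else 0) := by
        apply Finset.sum_congr rfl
        intro σ _
        rw [integral_indicator_const _ (hCmeas σ)]
        rw [smul_eq_mul]
        congr 1
        have hprod : μ (C σ) = ∏ i, μ (if σ i then A i else (A i)ᶜ) := by
          apply hindep.meas_iInter
          intro i
          by_cases hσ : σ i = true
          · rw [if_pos hσ]
            exact ⟨{v i}, measurableSet_singleton _, rfl⟩
          · rw [if_neg hσ]
            exact ⟨({v i} : Set ℝ)ᶜ, (measurableSet_singleton _).compl, rfl⟩
        rw [measureReal_def, hprod, ENNReal.toReal_prod]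
        apply Finset.prod_congr rfl
        intro i _
        by_cases hσ : σ i = true
        · rw [if_pos hσ, if_pos hσ]
        · rw [if_neg hσ, if_neg hσ, prob_compl_eq_one_sub (hAmeas i),
            ENNReal.toReal_sub_of_le prob_le_one ENNReal.one_ne_top, ENNReal.toReal_one]

end Bridge

lemma TALd_le_bound {τ C : ℝ} {l : List (ℝ × ℝ)} (hq : QOK l)
    (hv : ∀ e ∈ l, e.1 ≤ C) (hC : 0 ≤ C) : TALd τ l ≤ C := by
  have := Ex_mono hq (f := fun xs => pickL τ xs) (g := fun _ => C)
    (fun xs hxs => pickL_le (fun x hx => Pat_entry_le hxs hv hC hx) hC τ)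
  rwa [Ex_const] at this

lemma pickL_prefix_le {τ : ℝ} {ys : List ℝ} (hys : ∀ y ∈ ys, 0 ≤ y) :
    ∀ xs : List ℝ, pickL τ xs ≤ pickL τ (xs ++ ys) := by
  intro xs
  induction xs with
  | nil => exact pickL_nonneg hys τ
  | cons x xs ih =>
      rw [List.cons_append, pickL_cons, pickL_cons]
      by_cases h : τ ≤ x
      · rw [if_pos h, if_pos h]
      · rw [if_neg h, if_neg h]; exact ih

lemma TALd_mono_append {τ : ℝ} {l l' : List (ℝ × ℝ)} (hq : QOK (l ++ l'))
    (hv : ∀ e ∈ l ++ l', 0 ≤ e.1) : TALd τ l ≤ TALd τ (l ++ l') := by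
  rw [TALd, TALd, Ex_append]
  apply Ex_mono (fun e he => hq e (List.mem_append_left _ he))
  intro xs _
  have h1 : Ex l' (fun _ => pickL τ xs) ≤ Ex l' (fun ys => pickL τ (xs ++ ys)) := by
    apply Ex_mono (fun e he => hq e (List.mem_append_right _ he))
    intro ys hys
    exact pickL_prefix_le
      (fun y hy => Pat_entry_nonneg hys (fun e he => hv e (List.mem_append_right _ he)) hy) xs
  calc pickL τ xs = Ex l' (fun _ => pickL τ xs) := (Ex_const _ _).symm
    _ ≤ _ := h1

end Stmt5

open Stmt5 in
/-- For a sorted scaled Bernoulli instance with `τ*_α = η(I^(s_α))` as in the known-α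
algorithm, for every `k` with `v_k > τ*_α` we have `TAL_α(I, v_k) ≥ TAL_α(I, v_{k+1})`. -/
theorem stmt5 {Ω : Type*} [MeasurableSpace Ω] (μ : Measure Ω) [IsProbabilityMeasure μ]
    (α : ℝ) (hα : α ∈ Set.Ioo (0 : ℝ) 1)
    {n : ℕ} (X : Fin n → Ω → ℝ) (v p : Fin n → ℝ)
    (hmeas : ∀ i, Measurable (X i))
    (hindep : iIndepFun X μ)
    (hv0 : ∀ i, 0 ≤ v i) (hsorted : Monotone v)
    (hBer : ∀ i ω, X i ω = v i ∨ X i ω = 0)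
    (hprob : ∀ i, μ {ω | X i ω = v i} = ENNReal.ofReal (p i))
    (hint : Integrable (instMax X) μ)
    (sα : Fin n)
    (hmem : α * v sα ≤ SCthreshold μ (fun i : Fin (sα.1 + 1) => X (Fin.castLE sα.isLt i)))
    (hmax : ∀ k : Fin n,
      α * v k ≤ SCthreshold μ (fun i : Fin (k.1 + 1) => X (Fin.castLE k.isLt i)) → k ≤ sα)
    (k : ℕ) (hk : k + 1 < n)
    (hvk : SCthreshold μ (fun i : Fin (sα.1 + 1) => X (Fin.castLE sα.isLt i)) < v ⟨k, by omega⟩) :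
    TALpred μ α X (v ⟨k + 1, hk⟩) ≤ TALpred μ α X (v ⟨k, by omega⟩) := by
  classical
  set q : Fin n → ℝ := fun i => (μ {ω | X i ω = v i}).toReal with hqdef
  set L : List (ℝ × ℝ) := List.ofFn (fun i => (v i, q i)) with hLdef
  have hn0 : 0 < n := by omega
  -- basic facts about L
  have hmemL : ∀ e ∈ L, ∃ i : Fin n, (v i, q i) = e := by
    intro e he
    rw [hLdef, List.mem_ofFn] at he
    exact he
  have hQOK : QOK L := by
    intro e he
    obtain ⟨i, hi⟩ := hmemL e he
    rw [← hi]
    constructor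
    · exact ENNReal.toReal_nonneg
    · have h1 : μ {ω | X i ω = v i} ≤ 1 := prob_le_one
      calc (μ {ω | X i ω = v i}).toReal ≤ (1 : ENNReal).toReal :=
            ENNReal.toReal_mono ENNReal.one_ne_top h1
        _ = 1 := ENNReal.toReal_one
  have hVOK : ∀ e ∈ L, 0 ≤ e.1 := by
    intro e he; obtain ⟨i, hi⟩ := hmemL e he; rw [← hi]; exact hv0 i
  have hSOK : List.Pairwise (fun e f : ℝ × ℝ => e.1 ≤ f.1) L := by
    rw [hLdef, List.pairwise_ofFn]
    intro i j hij
    exact hsorted (le_of_lt hij)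
  have hLlen : L.length = n := by rw [hLdef, List.length_ofFn]
  -- bridging TAL over prefixes
  have hTAL : ∀ (m : ℕ) (hm : m ≤ n) (τ : ℝ),
      TAL μ (fun j : Fin m => X (Fin.castLE hm j)) τ = TALd τ (L.take m) := by
    intro m hm τ
    have hb := bridge μ X v hmeas hindep hBer
      (fun y => pick (fun j : Fin m => y (Fin.castLE hm j)) τ)
    have h1 : TAL μ (fun j : Fin m => X (Fin.castLE hm j)) τ
        = ∫ ω, (fun y => pick (fun j : Fin m => y (Fin.castLE hm j)) τ) (fun i => X i ω) ∂μ := rfl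
    rw [h1, hb]
    have h2 : ∀ σ : Fin n → Bool,
        pick (fun j : Fin m => (if σ (Fin.castLE hm j) then v (Fin.castLE hm j) else 0)) τ
        = pickL τ ((List.ofFn (fun i => if σ i then v i else 0)).take m) := by
      intro σ
      rw [pick_eq_pickL, ← ofFn_castLE hm]
    calc ∑ σ : Fin n → Bool, (∏ i, if σ i then q i else 1 - q i)
          * (fun y => pick (fun j : Fin m => y (Fin.castLE hm j)) τ) (fun i => if σ i then v i else 0)
        = ∑ σ : Fin n → Bool, (∏ i, if σ i then q i else 1 - q i)
          * (fun xs : List ℝ => pickL τ (xs.take m)) (List.ofFn (fun i => if σ i then v i else 0)) := by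
          apply Finset.sum_congr rfl
          intro σ _
          congr 1
          exact h2 σ
      _ = Ex L (fun xs => pickL τ (xs.take m)) := by
          rw [hLdef]; exact cube_to_Ex n v q (fun xs => pickL τ (xs.take m))
      _ = TALd τ (L.take m) := Ex_take L m _
  -- discrete threshold sets
  set Sd : ℕ → Set ℝ := fun m => {τ : ℝ | 0 ≤ τ ∧ τ ≤ TALd τ (L.take m)} with hSddef
  have hSC : ∀ (i : Fin n),
      SCthreshold μ (fun j : Fin (i.1 + 1) => X (Fin.castLE i.isLt j)) = sSup (Sd (i.1 + 1)) := by
    intro i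
    rw [SCthreshold]
    congr 1
    ext τ
    simp only [Set.mem_setOf_eq]
    rw [hTAL (i.1 + 1) i.isLt τ]
    rfl
  have hqtake : ∀ m, QOK (L.take m) := fun m e he => hQOK e (List.take_subset m L he)
  have hvtake : ∀ m, ∀ e ∈ L.take m, 0 ≤ e.1 := fun m e he => hVOK e (List.take_subset m L he)
  have hzero_mem : ∀ m, (0:ℝ) ∈ Sd m := by
    intro m
    refine ⟨le_refl 0, ?_⟩
    exact TALd_nonneg (hqtake m) (hvtake m) 0
  set C : ℝ := maxL (List.map Prod.fst L) with hCdef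
  have hC0 : 0 ≤ C := maxL_nonneg _
  have hCbound : ∀ e ∈ L, e.1 ≤ C := by
    intro e he
    apply le_maxL
    rw [List.mem_map]
    exact ⟨e, he, rfl⟩
  have hbdd : ∀ m, BddAbove (Sd m) := by
    intro m
    refine ⟨C, fun τ hτ => ?_⟩
    exact le_trans hτ.2 (TALd_le_bound (hqtake m) (fun e he => hCbound e (List.take_subset m L he)) hC0)
  have hSdmono : ∀ m m', m ≤ m' → sSup (Sd m) ≤ sSup (Sd m') := by
    intro m m' hmm'
    apply csSup_le_csSup (hbdd m') ⟨0, hzero_mem m⟩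
    intro τ hτ
    refine ⟨hτ.1, le_trans hτ.2 ?_⟩
    have hpre : L.take m <+: L.take m' := by
      have := List.take_prefix m (L.take m')
      rwa [List.take_take, min_eq_left hmm'] at this
    obtain ⟨rest, hrest⟩ := hpre
    rw [← hrest]
    exact TALd_mono_append (hrest ▸ hqtake m') (hrest ▸ hvtake m')
  -- the parameters
  set kf : Fin n := ⟨k, by omega⟩ with hkf
  set kf1 : Fin n := ⟨k + 1, hk⟩ with hkf1
  set t : ℝ := v kf with htdef
  set b : ℝ := v kf1 with hbdef
  have htb : t ≤ b := hsorted (by rw [hkf, hkf1]; exact Fin.mk_le_mk.2 (by omega))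
  have hτstar : (0:ℝ) ≤ sSup (Sd (sα.1 + 1)) :=
    le_csSup (hbdd _) (hzero_mem _)
  have hvk' : sSup (Sd (sα.1 + 1)) < t := by
    rw [← hSC sα]
    exact hvk
  have ht : 0 < t := lt_of_le_of_lt hτstar hvk'
  -- FactF at the discrete level
  have hFF : FFlt α t L := by
    intro pre e hpre
    set m : ℕ := pre.length with hmdef
    have hlen : m + 1 ≤ n := by
      have := hpre.length_le
      rw [hLlen] at this
      simpa using this
    have hmn : m < n := by omega
    set im : Fin n := ⟨m, hmn⟩ with him
    have htake : pre ++ [e] = L.take (m + 1) := by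
      have h1 := List.prefix_iff_eq_take.1 hpre
      have h2 : (pre ++ [e]).length = m + 1 := by simp [hmdef]
      rw [h2] at h1
      exact h1
    have hmlt : m < (pre ++ [e]).length := by simp [hmdef]
    have hegete : e = (v im, q im) := by
      have h3 : (pre ++ [e])[m]'hmlt = e := by
        have := List.getElem_concat_length (l := pre) (a := e) (i := m) hmdef (by simp [hmdef])
        exact this
      have h4 : (pre ++ [e])[m]'hmlt = (L.take (m+1))[m]'(htake ▸ hmlt) :=
        List.getElem_of_eq htake hmlt
      have h5 : (L.take (m+1))[m]'(htake ▸ hmlt) = L[m]'(by omega) := List.getElem_take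
      have h6 : L[m]'(by rw [hLlen]; omega) = (v im, q im) := by
        simp only [hLdef]
        rw [List.getElem_ofFn]
      rw [← h3, h4, h5, ← h6]
    have he1 : e.1 = v im := by rw [hegete]
    rw [htake, he1]
    -- now show TALd (max t (α * v im)) (L.take (m+1)) < max t (α * v im)
    set a : ℝ := max t (α * v im) with hadef
    have ha0 : 0 ≤ a := le_trans (le_of_lt ht) (le_max_left _ _)
    have hηa : sSup (Sd (m + 1)) < a := by
      by_cases hile : im ≤ sα
      · have h1 : sSup (Sd (m + 1)) ≤ sSup (Sd (sα.1 + 1)) := by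
          apply hSdmono
          have h7 : m ≤ sα.1 := hile
          omega
        calc sSup (Sd (m + 1)) ≤ sSup (Sd (sα.1 + 1)) := h1
          _ < t := hvk'
          _ ≤ a := le_max_left _ _
      · have h2 : ¬ (α * v im ≤ SCthreshold μ (fun j : Fin (im.1 + 1) => X (Fin.castLE im.isLt j))) :=
          fun hc => hile (hmax im hc)
        push_neg at h2
        rw [hSC im] at h2
        calc sSup (Sd (m + 1)) = sSup (Sd (im.1 + 1)) := rfl
          _ < α * v im := h2
          _ ≤ a := le_max_right _ _
    by_contra hcon
    push_neg at hcon
    have hmema : a ∈ Sd (m + 1) := ⟨ha0, hcon⟩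
    have := le_csSup (hbdd (m + 1)) hmema
    linarith
  -- bridging TALpred
  have hTALpred : ∀ τ : ℝ, TALpred μ α X τ = Fd α τ L := by
    intro τ
    have hb := bridge μ X v hmeas hindep hBer
      (fun y => pick y (max τ (α * ⨆ i, y i)))
    have h1 : TALpred μ α X τ
        = ∫ ω, (fun y => pick y (max τ (α * ⨆ i, y i))) (fun i => X i ω) ∂μ := rfl
    rw [h1, hb]
    calc ∑ σ : Fin n → Bool, (∏ i, if σ i then q i else 1 - q i)
          * (fun y => pick y (max τ (α * ⨆ i, y i))) (fun i => if σ i then v i else 0)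
        = ∑ σ : Fin n → Bool, (∏ i, if σ i then q i else 1 - q i)
          * (fun xs : List ℝ => pickL (max τ (α * maxL xs)) xs)
              (List.ofFn (fun i => if σ i then v i else 0)) := by
          apply Finset.sum_congr rfl
          intro σ _
          congr 1
          have hsup : (⨆ i, (if σ i then v i else 0)) = maxL (List.ofFn (fun i => if σ i then v i else 0)) := by
            apply iSup_eq_maxL hn0
            intro i
            by_cases hσ : σ i = true
            · rw [if_pos hσ]; exact hv0 i
            · rw [if_neg hσ]
          dsimp only
          rw [hsup, pick_eq_pickL]
      _ = Ex L (fun xs => pickL (max τ (α * maxL xs)) xs) := by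
          rw [hLdef]; exact cube_to_Ex n v q (fun xs => pickL (max τ (α * maxL xs)) xs)
      _ = Fd α τ L := rfl
  rw [hTALpred, hTALpred]
  show Fd α b L ≤ Fd α t L
  exact mainD hα.1 (le_of_lt hα.2) ht htb L hQOK hVOK hSOK hFF
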